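/- arXiv:0804.1294 — 6 statements merged into one kernel-verified Lean document; each statement's English description precedes it below -/
import Mathlib

section
/- A connected undirected graph G admits a strongly connected orientation (an assignment of a direction to each edge such that every vertex is reachable from every other by a directed path) if and only if G has no bridge. -/
open scoped Classical

/-- `H` is an orientation of the simple graph `G`: every edge gets exactly one direction. -/
structure IsOrientation {V : Type*} (G : SimpleGraph V) (H : V → V → Prop) : Prop where
  le_adj : ∀ u v, H u v → G.Adj u v
  total : ∀ u v, G.Adj u v → H u v ∨ H v u
  asymm : ∀ u v, H u v → ¬ H v u

/-- A digraph (given by its arc relation) is strongly connected if every vertex is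
reachable from every other by a directed path. -/
def StronglyConnected {V : Type*} (H : V → V → Prop) : Prop :=
  ∀ u v : V, Relation.ReflTransGen H u v

/-- Directed distance: length of a shortest directed walk from `u` to `v`. -/
noncomputable def ddist {V : Type*} (H : V → V → Prop) (u v : V) : ℕ :=
  sInf {n | ∃ f : ℕ → V, f 0 = u ∧ f n = v ∧ ∀ i < n, H (f i) (f (i + 1))}

/-- Diameter of a digraph on a finite vertex type. -/
noncomputable def ddiam {V : Type*} [Fintype V] (H : V → V → Prop) : ℕ :=
  Finset.univ.sup fun p : V × V => ddist H p.1 p.2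

/-- The minimum oriented diameter of a graph. -/
noncomputable def minOrientedDiam {V : Type*} [Fintype V] (G : SimpleGraph V) : ℕ :=
  sInf {d | ∃ H : V → V → Prop, IsOrientation G H ∧ StronglyConnected H ∧ ddiam H = d}

/-- A graph is bridgeless if no edge is a bridge. -/
def Bridgeless {V : Type*} (G : SimpleGraph V) : Prop :=
  ∀ e : Sym2 V, ¬ G.IsBridge e

/-- `D` is a dominating set of `G`. -/
def Dominating {V : Type*} (G : SimpleGraph V) (D : Set V) : Prop :=
  ∀ v ∉ D, ∃ u ∈ D, G.Adj u v

/-- The domination number of a finite graph. -/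
noncomputable def dominationNumber {V : Type*} [Fintype V] (G : SimpleGraph V) : ℕ :=
  sInf {n | ∃ D : Finset V, Dominating G ↑D ∧ D.card = n}

/-!
An arc `u → v` of a strongly connected orientation lies on a directed cycle (close it by a
directed path from `v` back to `u`), so deleting the edge `uv` cannot disconnect `u` from `v`.

Conversely, grow a strongly connected orientation of the subgraph spanned by a vertex set `S`,
starting from a single vertex. While `S` is not everything, connectivity gives an edge `xy` with
`x ∈ S`, `y ∉ S`; as `xy` is not a bridge, a walk from `y` back to `x` avoids it, and its part up
to the first return to `S`, shortened to a path, yields together with `xy` an ear: a trail from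
`S` to `S` whose edges all leave `S`. Orienting the ear along its direction keeps the orientation
strongly connected on the enlarged set. Once `S` is all of `V`, the remaining edges may be
oriented arbitrarily.
-/

open Relation SimpleGraph

theorem Relation.ReflTransGen.mono_or_of_forall_ne {α : Type*} {r s : α → α → Prop}
    {a b x y : α} (hrs : ∀ c d, r c d → (c, d) ≠ (a, b) → s c d) (hxy : ReflTransGen r x y) :
    ReflTransGen s x y ∨ ReflTransGen s x a := by
  induction hxy with
  | refl => exact .inl .refl
  | @tail c d _ hcd ih =>
    by_cases hab : (c, d) = (a, b)
    · obtain ⟨rfl, rfl⟩ := Prod.mk.inj hab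
      exact .inr (ih.elim id id)
    · exact ih.imp_left (·.tail (hrs c d hcd hab))

section Orientation

variable {V : Type*} {G : SimpleGraph V} {H : V → V → Prop}

theorem reachable_deleteEdges_of_not_rel (hle : ∀ u v, H u v → G.Adj u v)
    (hsc : StronglyConnected H) {u v : V} (hvu : ¬ H v u) :
    (G.deleteEdges {s(u, v)}).Reachable v u := by
  have hstep : ∀ c d, H c d → (c, d) ≠ (u, v) → (G.deleteEdges {s(u, v)}).Adj c d := by
    intro c d hcd hne
    refine (deleteEdges_adj ..).2 ⟨hle c d hcd, fun he => ?_⟩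
    rcases Sym2.eq_iff.1 (Set.mem_singleton_iff.1 he) with ⟨rfl, rfl⟩ | ⟨rfl, rfl⟩
    · exact hne rfl
    · exact hvu hcd
  simp only [reachable_iff_reflTransGen]
  exact ((hsc v u).mono_or_of_forall_ne hstep).elim id id

theorem IsOrientation.bridgeless (hH : IsOrientation G H) (hsc : StronglyConnected H) :
    Bridgeless G := by
  intro e
  induction e using Sym2.ind with
  | _ u v =>
    rw [isBridge_iff, not_not]
    by_cases hvu : H v u
    · have huv := reachable_deleteEdges_of_not_rel hH.le_adj hsc (hH.asymm v u hvu)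
      rwa [Sym2.eq_swap] at huv
    · exact (reachable_deleteEdges_of_not_rel hH.le_adj hsc hvu).symm

theorem exists_isOrientation_ge (hle : ∀ u v, H u v → G.Adj u v)
    (hasymm : ∀ u v, H u v → ¬ H v u) :
    ∃ H' : V → V → Prop, IsOrientation G H' ∧ H ≤ H' := by
  let H' u v := H u v ∨ (G.Adj u v ∧ ¬ H v u ∧ WellOrderingRel u v)
  refine ⟨H', ⟨?_, ?_, ?_⟩, fun u v => .inl⟩
  · rintro u v (h | ⟨h, -⟩)
    exacts [hle u v h, h]
  · intro u v huv
    by_cases h : H u v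
    · exact .inl (.inl h)
    by_cases h' : H v u
    · exact .inr (.inl h')
    rcases trichotomous_of WellOrderingRel u v with hlt | rfl | hgt
    · exact .inl (.inr ⟨huv, h', hlt⟩)
    · exact absurd rfl huv.ne
    · exact .inr (.inr ⟨huv.symm, h, hgt⟩)
  · rintro u v (h | ⟨-, hvu, hlt⟩) (h' | ⟨-, huv, hgt⟩)
    · exact hasymm u v h h'
    · exact huv h
    · exact hvu h'
    · exact asymm hlt hgt

end Orientation

namespace SimpleGraph.Walk

variable {V : Type*} {G : SimpleGraph V}

def HasDart {u v : V} (p : G.Walk u v) (a b : V) : Prop :=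
  ∃ h : G.Adj a b, ⟨(a, b), h⟩ ∈ p.darts

theorem HasDart.mem_support {u v a b : V} {p : G.Walk u v} (h : p.HasDart a b) :
    a ∈ p.support ∧ b ∈ p.support :=
  ⟨p.dart_fst_mem_support_of_mem_darts h.2, p.dart_snd_mem_support_of_mem_darts h.2⟩

@[simp]
theorem hasDart_cons {u v w a b : V} (h : G.Adj u v) (p : G.Walk v w) :
    (cons h p).HasDart a b ↔ (u, v) = (a, b) ∨ p.HasDart a b := by
  simp only [HasDart, darts_cons, List.mem_cons, Dart.ext_iff, Prod.ext_iff]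
  grind

theorem IsTrail.not_hasDart_swap {u v a b : V} {p : G.Walk u v} (hp : p.IsTrail)
    (hab : p.HasDart a b) : ¬ p.HasDart b a := by
  obtain ⟨h, hd⟩ := hab
  rintro ⟨_, hd'⟩
  let d : G.Dart := ⟨(a, b), h⟩
  exact d.symm_ne (List.inj_on_of_nodup_map hp.edges_nodup hd' hd d.edge_symm)

theorem reflTransGen_hasDart_of_mem_support {u v w : V} (p : G.Walk u v) (hw : w ∈ p.support) :
    ReflTransGen p.HasDart u w ∧ ReflTransGen p.HasDart w v := by
  induction p generalizing w with
  | nil =>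
    obtain rfl := List.mem_singleton.1 hw
    exact ⟨.refl, .refl⟩
  | @cons u x v h p ih =>
    have hmono : ReflTransGen p.HasDart ≤ ReflTransGen (cons h p).HasDart :=
      ReflTransGen.mono fun a b hab => (hasDart_cons h p).2 (.inr hab)
    have hfirst : (cons h p).HasDart u x := (hasDart_cons h p).2 (.inl rfl)
    rcases List.mem_cons.1 hw with rfl | hw
    · exact ⟨.refl, .head hfirst (hmono _ _ (ih p.start_mem_support).2)⟩
    · exact ⟨.head hfirst (hmono _ _ (ih hw).1), hmono _ _ (ih hw).2⟩

theorem exists_walk_darts_fst_notMem {u v : V} (p : G.Walk u v) {S : Set V} (hv : v ∈ S) :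
    ∃ z ∈ S, ∃ q : G.Walk u z, q.edges ⊆ p.edges ∧ ∀ d ∈ q.darts, d.fst ∉ S := by
  induction p with
  | nil => exact ⟨_, hv, nil, by simp, by simp⟩
  | @cons u x v h p ih =>
    by_cases hu : u ∈ S
    · exact ⟨u, hu, nil, by simp, by simp⟩
    obtain ⟨z, hz, q, hqp, hqS⟩ := ih hv
    refine ⟨z, hz, cons h q, ?_, ?_⟩
    · simpa [edges_cons] using List.cons_subset_cons _ hqp
    · simp only [darts_cons, List.mem_cons, forall_eq_or_imp]
      exact ⟨hu, hqS⟩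

end SimpleGraph.Walk

section Ear

open Walk

variable {V : Type*} {G : SimpleGraph V}

structure IsStrongOrientationOn (G : SimpleGraph V) (S : Set V) (H : V → V → Prop) : Prop where
  le_adj : ∀ u v, H u v → G.Adj u v
  asymm : ∀ u v, H u v → ¬ H v u
  mem : ∀ u v, H u v → u ∈ S ∧ v ∈ S
  reach : ∀ u ∈ S, ∀ v ∈ S, ReflTransGen H u v

theorem isStrongOrientationOn_singleton (v : V) :
    IsStrongOrientationOn G {v} (fun _ _ => False) where
  le_adj _ _ := False.elim
  asymm _ _ := False.elim
  mem _ _ := False.elim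
  reach := by
    rintro u rfl v rfl
    exact .refl

theorem IsStrongOrientationOn.union_support {S : Set V} {H : V → V → Prop}
    (hH : IsStrongOrientationOn G S H) {x z : V} (r : G.Walk x z) (hr : r.IsTrail) (hx : x ∈ S)
    (hz : z ∈ S) (hrS : ∀ a b, r.HasDart a b → ¬ (a ∈ S ∧ b ∈ S)) :
    IsStrongOrientationOn G (S ∪ {w | w ∈ r.support}) (fun a b => H a b ∨ r.HasDart a b) where
  le_adj a b := by
    rintro (h | h)
    exacts [hH.le_adj a b h, h.1]
  asymm a b := by
    rintro (h | h) (h' | h')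
    · exact hH.asymm a b h h'
    · exact hrS b a h' (hH.mem a b h).symm
    · exact hrS a b h (hH.mem b a h').symm
    · exact hr.not_hasDart_swap h h'
  mem a b := by
    rintro (h | h)
    · exact ⟨.inl (hH.mem a b h).1, .inl (hH.mem a b h).2⟩
    · exact ⟨.inr h.mem_support.1, .inr h.mem_support.2⟩
  reach := by
    have hold : ReflTransGen H ≤ ReflTransGen (fun a b => H a b ∨ r.HasDart a b) :=
      ReflTransGen.mono fun _ _ => .inl
    have hnew : ReflTransGen r.HasDart ≤ ReflTransGen (fun a b => H a b ∨ r.HasDart a b) :=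
      ReflTransGen.mono fun _ _ => .inr
    have hto : ∀ u ∈ S ∪ {w | w ∈ r.support},
        ReflTransGen (fun a b => H a b ∨ r.HasDart a b) u x := by
      rintro u (hu | hu)
      · exact hold _ _ (hH.reach u hu x hx)
      · exact (hnew _ _ (r.reflTransGen_hasDart_of_mem_support hu).2).trans
          (hold _ _ (hH.reach z hz x hx))
    have hfrom : ∀ v ∈ S ∪ {w | w ∈ r.support},
        ReflTransGen (fun a b => H a b ∨ r.HasDart a b) x v := by
      rintro v (hv | hv)
      · exact hold _ _ (hH.reach x hx v hv)
      · exact hnew _ _ (r.reflTransGen_hasDart_of_mem_support hv).1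
    exact fun u hu v hv => (hto u hu).trans (hfrom v hv)

theorem exists_ear_of_bridgeless (hconn : G.Connected) (hbl : Bridgeless G) {S : Set V}
    (hS : S.Nonempty) (hSV : S ≠ Set.univ) :
    ∃ x ∈ S, ∃ z ∈ S, ∃ r : G.Walk x z, r.IsTrail ∧
      (∀ a b, r.HasDart a b → ¬ (a ∈ S ∧ b ∈ S)) ∧ ∃ y ∈ r.support, y ∉ S := by
  obtain ⟨a, ha⟩ := hS
  obtain ⟨b, hb⟩ := (Set.ne_univ_iff_exists_notMem S).1 hSV
  obtain ⟨⟨⟨x, y⟩, hxy⟩, -, hx, hy⟩ :=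
    (hconn.preconnected a b).some.exists_boundary_dart S ha hb
  obtain ⟨p, hp⟩ : ∃ p : G.Walk x y, s(x, y) ∉ p.edges := by
    simpa [isBridge_iff_forall_walk_mem_edges] using hbl s(x, y)
  obtain ⟨z, hz, q, hqp, hqS⟩ := p.reverse.exists_walk_darts_fst_notMem hx
  refine ⟨x, hx, z, hz, cons hxy q.bypass, ?_, ?_, y, by simp, hy⟩
  · rw [isTrail_cons]
    refine ⟨q.bypass_isPath.isTrail, fun h => hp ?_⟩
    simpa using hqp (q.edges_bypass_subset_edges h)
  · rintro a b hab ⟨ha, hb⟩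
    rcases (hasDart_cons hxy _).1 hab with h | ⟨_, hd⟩
    · cases h
      exact hy hb
    · exact hqS _ (q.darts_bypass_subset_darts hd) ha

theorem exists_isStrongOrientationOn_univ [Finite V] (hconn : G.Connected)
    (hbl : Bridgeless G) : ∃ H, IsStrongOrientationOn G Set.univ H := by
  obtain ⟨v⟩ := hconn.nonempty
  obtain ⟨S, hvS, hmax⟩ :=
    (Set.toFinite {S : Set V | ∃ H, IsStrongOrientationOn G S H}).exists_le_maximal
      ⟨_, isStrongOrientationOn_singleton v⟩
  obtain ⟨H, hH⟩ := hmax.prop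
  suffices hS : S = Set.univ from ⟨H, hS ▸ hH⟩
  by_contra hSV
  obtain ⟨x, hx, z, hz, r, hr, hrS, y, hy, hyS⟩ :=
    exists_ear_of_bridgeless hconn hbl ⟨v, hvS rfl⟩ hSV
  have hgrow := hmax.eq_of_superset ⟨_, hH.union_support r hr hx hz hrS⟩ Set.subset_union_left
  exact hyS (hgrow ▸ Set.mem_union_right S hy)

end Ear

/-- **Robbins' theorem.** A finite connected graph admits a strongly connected
orientation iff it has no bridge. -/
theorem robbins_orientation {V : Type*} [Fintype V] (G : SimpleGraph V)
    (hconn : G.Connected) :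
    (∃ H : V → V → Prop, IsOrientation G H ∧ StronglyConnected H) ↔ Bridgeless G := by
  refine ⟨fun ⟨H, hH, hsc⟩ => hH.bridgeless hsc, fun hbl => ?_⟩
  obtain ⟨H, hH⟩ := exists_isStrongOrientationOn_univ hconn hbl
  obtain ⟨H', hH', hle⟩ := exists_isOrientation_ge hH.le_adj hH.asymm
  exact ⟨H', hH', fun u v => ReflTransGen.mono hle u v (hH.reach u trivial v trivial)⟩
end

section
/- If H is a strongly connected orientation of an undirected graph G and C is a directed cycle in H without repeated edges, then the orientation obtained from H by reversing the direction of every edge of C is again strongly connected. -/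
open scoped Classical

/-- Reversing the edges of a directed cycle (a closed directed walk without repeated
edges) in a strongly connected orientation yields a strongly connected orientation. -/
theorem reverse_cycle_strongly_connected {V : Type*} (G : SimpleGraph V)
    (H : V → V → Prop) (hH : IsOrientation G H) (hsc : StronglyConnected H)
    (n : ℕ) (hn : 0 < n) (c : ℕ → V) (hclosed : c n = c 0)
    (hstep : ∀ i < n, H (c i) (c (i + 1)))
    (hedges : ∀ i < n, ∀ j < n, c i = c j ∧ c (i + 1) = c (j + 1) → i = j) :
    StronglyConnected (fun u v =>
      (H u v ∧ ¬ ∃ i < n, c i = u ∧ c (i + 1) = v) ∨ (∃ i < n, c i = v ∧ c (i + 1) = u)) := by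
  set H' : V → V → Prop := fun u v =>
      (H u v ∧ ¬ ∃ i < n, c i = u ∧ c (i + 1) = v) ∨ (∃ i < n, c i = v ∧ c (i + 1) = u)
    with hH'def
  have hback : ∀ i < n, H' (c (i + 1)) (c i) := fun i hi => Or.inr ⟨i, hi, rfl, rfl⟩
  have down : ∀ m k, k + m ≤ n → Relation.ReflTransGen H' (c (k + m)) (c k) := by
    intro m
    induction m with
    | zero => intro k _; exact .refl
    | succ m ih =>
      intro k h
      have h1 : k + m < n := by omega
      have h2 : Relation.ReflTransGen H' (c (k + m)) (c k) := ih k (by omega)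
      exact Relation.ReflTransGen.head (hback (k + m) h1) h2
  have cyc : ∀ i < n, Relation.ReflTransGen H' (c i) (c (i + 1)) := by
    intro i hi
    have h1 : Relation.ReflTransGen H' (c i) (c 0) := by
      have := down i 0 (by omega); simpa using this
    have h2 : Relation.ReflTransGen H' (c n) (c (i + 1)) := by
      have := down (n - (i + 1)) (i + 1) (by omega)
      rwa [show i + 1 + (n - (i + 1)) = n by omega] at this
    exact h1.trans (hclosed ▸ h2)
  have key : ∀ a b, H a b → Relation.ReflTransGen H' a b := by
    intro a b hab
    by_cases h : ∃ i < n, c i = a ∧ c (i + 1) = b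
    · obtain ⟨i, hi, rfl, rfl⟩ := h
      exact cyc i hi
    · exact .single (Or.inl ⟨hab, h⟩)
  intro u v
  induction hsc u v with
  | refl => exact .refl
  | tail _ h ih => exact ih.trans (key _ _ h)
end

section
/- If H is a strongly connected orientation of an undirected graph G, and P1 and P2 are two edge-disjoint directed paths in H from a vertex x to a vertex y, then the orientation obtained from H by reversing all edges of P2 is again strongly connected. -/
open scoped Classical

/-- If `P1` and `P2` are edge-disjoint directed paths from `x` to `y` in a strongly
connected orientation `H`, then reversing all edges of `P2` yields a strongly
connected orientation. -/
theorem reverse_path_strongly_connected {V : Type*} (G : SimpleGraph V)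
    (H : V → V → Prop) (hH : IsOrientation G H) (hsc : StronglyConnected H)
    (x y : V) (m k : ℕ) (p q : ℕ → V)
    (hp0 : p 0 = x) (hpm : p m = y) (hq0 : q 0 = x) (hqk : q k = y)
    (hpstep : ∀ i < m, H (p i) (p (i + 1))) (hqstep : ∀ j < k, H (q j) (q (j + 1)))
    (hpinj : ∀ i ≤ m, ∀ j ≤ m, p i = p j → i = j)
    (hqinj : ∀ i ≤ k, ∀ j ≤ k, q i = q j → i = j)
    (hdisj : ∀ i < m, ∀ j < k, ¬ (p i = q j ∧ p (i + 1) = q (j + 1))) :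
    StronglyConnected (fun u v =>
      (H u v ∧ ¬ ∃ j < k, q j = u ∧ q (j + 1) = v) ∨ (∃ j < k, q j = v ∧ q (j + 1) = u)) := by

  set H' : V → V → Prop := fun u v =>
      (H u v ∧ ¬ ∃ j < k, q j = u ∧ q (j + 1) = v) ∨ (∃ j < k, q j = v ∧ q (j + 1) = u)
    with hH'def
  have hdown : ∀ a b : ℕ, a ≤ b → b ≤ k → Relation.ReflTransGen H' (q b) (q a) := by
    intro a b
    induction b with
    | zero =>
      intro hab _
      interval_cases a
      exact Relation.ReflTransGen.refl
    | succ n ih =>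
      intro hab hbk
      rcases Nat.eq_or_lt_of_le hab with h | h
      · subst h; exact Relation.ReflTransGen.refl
      · have ha : a ≤ n := Nat.lt_succ_iff.mp h
        exact Relation.ReflTransGen.head
          (Or.inr ⟨n, Nat.lt_of_succ_le hbk, rfl, rfl⟩)
          (ih ha (Nat.le_of_succ_le hbk))
  have hpath : ∀ i ≤ m, Relation.ReflTransGen H' x (p i) := by
    intro i
    induction i with
    | zero => intro _; rw [hp0]
    | succ n ih =>
      intro hn
      have hnm : n < m := Nat.lt_of_succ_le hn
      refine (ih hnm.le).tail ?_
      exact Or.inl ⟨hpstep n hnm, fun ⟨j, hj, h1, h2⟩ =>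
        hdisj n hnm j hj ⟨h1.symm, h2.symm⟩⟩
  have hxy : Relation.ReflTransGen H' x y := hpm ▸ hpath m le_rfl
  have hedge : ∀ u v, H u v → Relation.ReflTransGen H' u v := by
    intro u v huv
    by_cases hq : ∃ j < k, q j = u ∧ q (j + 1) = v
    · obtain ⟨j, hj, h1, h2⟩ := hq
      subst h1; subst h2
      have s1 : Relation.ReflTransGen H' (q j) x :=
        hq0 ▸ hdown 0 j (Nat.zero_le _) hj.le
      have s2 : Relation.ReflTransGen H' y (q (j + 1)) :=
        hqk ▸ hdown (j + 1) k hj le_rfl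
      exact (s1.trans hxy).trans s2
    · exact Relation.ReflTransGen.single (Or.inl ⟨huv, hq⟩)
  intro u v
  have h := hsc u v
  induction h with
  | refl => exact Relation.ReflTransGen.refl
  | tail _ h2 ih => exact ih.trans (hedge _ _ h2)
end

section
/- Every bridgeless connected graph G with domination number γ(G) = 1 has minimum oriented diameter at most 4, and this bound is attained (e.g. by two triangles sharing a vertex). -/
open scoped Classical

/-! Let `c` be adjacent to every other vertex. No edge `cv` is a bridge, so every `v ≠ c` has a
neighbour other than `c`; hence a labelling of `G - c` with the most bichromatic edges gives every
`v ≠ c` a neighbour of the other label. Put `c` on level `0` and the two label classes on levels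
`1` and `2`, and orient edges between levels `0 → 1 → 2 → 0` (and within a level arbitrarily):
every vertex then reaches `c`, and is reached from `c`, in at most two steps.

In the bowtie, every strongly connected orientation makes both triangles directed cycles through
the shared vertex, and the two ends of the resulting forced path of length four are at distance
four. -/

def HasWalk {V : Type*} (H : V → V → Prop) (n : ℕ) (u v : V) : Prop :=
  ∃ f : ℕ → V, f 0 = u ∧ f n = v ∧ ∀ i < n, H (f i) (f (i + 1))

section Walks

variable {V : Type*} {H : V → V → Prop} {m n : ℕ} {u v w : V}

theorem hasWalk_zero (u : V) : HasWalk H 0 u u := ⟨fun _ => u, rfl, rfl, by simp⟩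

theorem hasWalk_one (h : H u v) : HasWalk H 1 u v :=
  ⟨fun i => if i = 0 then u else v, rfl, rfl, fun i hi => by simpa [Nat.lt_one_iff.mp hi] using h⟩

theorem HasWalk.append (h₁ : HasWalk H m u w) (h₂ : HasWalk H n w v) :
    HasWalk H (m + n) u v := by
  obtain ⟨f, hf0, hfm, hf⟩ := h₁
  obtain ⟨g, hg0, hgn, hg⟩ := h₂
  refine ⟨fun i => if i ≤ m then f i else g (i - m), by simp [hf0], ?_, fun i hi => ?_⟩
  · dsimp only
    split_ifs with h
    · rw [show n = 0 by omega] at hgn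
      rw [show m + n = m by omega, hfm, ← hg0, hgn]
    · simp [hgn]
  · dsimp only
    rcases lt_trichotomy i m with hlt | rfl | hgt
    · rw [if_pos hlt.le, if_pos (Nat.succ_le_of_lt hlt)]
      exact hf i hlt
    · simpa [hfm, ← hg0] using hg 0 (by omega)
    · rw [if_neg (by omega), if_neg (by omega), show i + 1 - m = i - m + 1 by omega]
      exact hg (i - m) (by omega)

theorem HasWalk.reflTransGen (h : HasWalk H n u v) : Relation.ReflTransGen H u v := by
  induction n generalizing v with
  | zero => obtain ⟨f, rfl, rfl, -⟩ := h; rfl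
  | succ n ih =>
    obtain ⟨f, rfl, rfl, hf⟩ := h
    exact (ih ⟨f, rfl, rfl, fun i hi => hf i (by omega)⟩).tail (hf n n.lt_succ_self)

theorem Relation.ReflTransGen.exists_hasWalk (h : Relation.ReflTransGen H u v) :
    ∃ n, HasWalk H n u v := by
  induction h with
  | refl => exact ⟨0, hasWalk_zero u⟩
  | tail _ hvw ih =>
    obtain ⟨n, hn⟩ := ih
    exact ⟨n + 1, hn.append (hasWalk_one hvw)⟩

theorem ddist_le (h : HasWalk H n u v) : ddist H u v ≤ n := Nat.sInf_le h

theorem four_le_ddist {a b c e : V} (hae : a ≠ e) (hbe : b ≠ e) (hce : c ≠ e)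
    (ha : ∀ x, H a x → x = b) (hb : ∀ x, H b x → x = c) (hc : ¬ H c e)
    (hreach : Relation.ReflTransGen H a e) : 4 ≤ ddist H a e := by
  refine le_csInf hreach.exists_hasWalk ?_
  rintro n ⟨f, rfl, rfl, hf⟩
  by_contra! hn
  have hf1 : n ≠ 0 → f 1 = b := fun h => ha _ (hf 0 (by omega))
  have hf2 : n ≠ 0 → n ≠ 1 → f 2 = c := fun h h' => hb _ (hf1 h ▸ hf 1 (by omega))
  interval_cases n
  · exact hae rfl
  · exact hbe (hf1 one_ne_zero).symm
  · exact hce (hf2 two_ne_zero (by decide)).symm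
  · exact hc (hf2 three_ne_zero (by decide) ▸ hf 2 (by omega))

end Walks

section Diameter

variable {V : Type*} [Fintype V] {H : V → V → Prop}

theorem ddist_le_ddiam (u v : V) : ddist H u v ≤ ddiam H :=
  Finset.le_sup (f := fun p : V × V => ddist H p.1 p.2) (Finset.mem_univ (u, v))

theorem ddiam_le_add_of_hub {c : V} {a b : ℕ} (hout : ∀ v, ∃ m ≤ a, HasWalk H m v c)
    (hin : ∀ v, ∃ m ≤ b, HasWalk H m c v) : ddiam H ≤ a + b := by
  refine Finset.sup_le fun p _ => ?_
  obtain ⟨m, hm, hp₁⟩ := hout p.1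
  obtain ⟨k, hk, hp₂⟩ := hin p.2
  exact (ddist_le (hp₁.append hp₂)).trans (by omega)

theorem minOrientedDiam_le_ddiam {G : SimpleGraph V} (ho : IsOrientation G H)
    (hsc : StronglyConnected H) : minOrientedDiam G ≤ ddiam H :=
  Nat.sInf_le ⟨H, ho, hsc, rfl⟩

theorem le_minOrientedDiam {G : SimpleGraph V} {d : ℕ}
    (hex : ∃ H, IsOrientation G H ∧ StronglyConnected H)
    (h : ∀ H, IsOrientation G H → StronglyConnected H → d ≤ ddiam H) :
    d ≤ minOrientedDiam G := by
  obtain ⟨H, ho, hsc⟩ := hex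
  refine le_csInf ⟨_, H, ho, hsc, rfl⟩ ?_
  rintro _ ⟨H', ho', hsc', rfl⟩
  exact h H' ho' hsc'

end Diameter

section Graphs

variable {V : Type*} {G : SimpleGraph V} {u v : V}

theorem dominating_singleton_iff {c : V} : Dominating G {c} ↔ ∀ v ≠ c, G.Adj c v := by
  simp [Dominating]

theorem dominationNumber_eq_one_iff [Fintype V] [Nonempty V] :
    dominationNumber G = 1 ↔ ∃ c, ∀ v ≠ c, G.Adj c v := by
  set S := {n | ∃ D : Finset V, Dominating G ↑D ∧ D.card = n}
  constructor
  · intro h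
    obtain ⟨D, hD, hcard⟩ : 1 ∈ S := h ▸ Nat.sInf_mem (Nat.nonempty_of_sInf_eq_succ h)
    obtain ⟨c, rfl⟩ := Finset.card_eq_one.mp hcard
    exact ⟨c, dominating_singleton_iff.mp (by simpa using hD)⟩
  · rintro ⟨c, hc⟩
    have h1 : 1 ∈ S := ⟨{c}, by simpa using dominating_singleton_iff.mpr hc, rfl⟩
    refine le_antisymm (Nat.sInf_le h1) (le_csInf ⟨1, h1⟩ fun n hn => ?_)
    obtain ⟨D, hD, rfl⟩ := hn
    obtain ⟨v⟩ := ‹Nonempty V›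
    exact Finset.card_pos.mpr (if hv : v ∈ D then ⟨v, hv⟩ else (hD v hv).imp fun _ h => h.1)

theorem not_isBridge_of_adj_of_adj {w : V} (huw : G.Adj u w) (hwv : G.Adj w v) :
    ¬ G.IsBridge s(u, v) := by
  rw [SimpleGraph.isBridge_iff_forall_walk_mem_edges, not_forall]
  refine ⟨.cons huw (.cons hwv .nil), ?_⟩
  simp [huw.ne, hwv.ne']

theorem Bridgeless.exists_adj_ne (hbl : Bridgeless G) (h : G.Adj u v) :
    ∃ w ≠ u, G.Adj v w := by
  have := hbl s(v, u)
  rw [SimpleGraph.isBridge_iff_forall_walk_mem_edges, not_forall] at this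
  obtain ⟨p, hp⟩ := this
  cases p with
  | nil => exact absurd h G.irrefl
  | cons hvw q => exact ⟨_, fun hwu => hp (by simp [hwu]), hvw⟩

/-- Take a labelling with the most bichromatic edges: a vertex with no neighbour of the other label
could switch its label, gaining all its edges and losing none. -/
theorem SimpleGraph.exists_labelling_exists_adj_ne [Finite V] (G : SimpleGraph V) :
    ∃ f : V → Bool, ∀ v w, G.Adj v w → ∃ u, G.Adj v u ∧ f u ≠ f v := by
  classical
  let cut (f : V → Bool) : Set (V × V) := {p | G.Adj p.1 p.2 ∧ f p.1 ≠ f p.2}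
  obtain ⟨f, hf⟩ := Finite.exists_max fun f => (cut f).ncard
  refine ⟨f, fun v w hvw => ?_⟩
  by_contra! hsame
  let f' := Function.update f v (!f v)
  have hsub : cut f ⊆ cut f' := by
    rintro ⟨x, y⟩ ⟨hxy, hne⟩
    have hx : x ≠ v := by rintro rfl; exact hne (hsame y hxy).symm
    have hy : y ≠ v := by rintro rfl; exact hne (hsame x hxy.symm)
    exact ⟨hxy, by simpa [f', hx, hy] using hne⟩
  have hvw' : (v, w) ∈ cut f' := ⟨hvw, by simp [f', hvw.ne', hsame w hvw]⟩
  have hlt := Set.ncard_lt_ncard ((Set.ssubset_iff_of_subset hsub).mpr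
    ⟨_, hvw', fun h => h.2 (hsame w hvw).symm⟩)
  exact (hf f').not_gt hlt

end Graphs

section Orientation

variable {V : Type*} {G : SimpleGraph V}

def cyclicOrientation (G : SimpleGraph V) (φ : V → ZMod 3) (r : V → ℕ) : V → V → Prop :=
  fun u v => G.Adj u v ∧ (φ v = φ u + 1 ∨ φ u = φ v ∧ r u < r v)

theorem isOrientation_cyclicOrientation (φ : V → ZMod 3) {r : V → ℕ} (hr : Function.Injective r) :
    IsOrientation G (cyclicOrientation G φ r) where
  le_adj _ _ h := h.1
  total u v huv := by
    have hlevel : ∀ a b : ZMod 3, a = b ∨ b = a + 1 ∨ a = b + 1 := by decide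
    have hrank : r u ≠ r v := hr.ne huv.ne
    rcases hlevel (φ u) (φ v) with h | h | h
    · rcases hrank.lt_or_gt with hlt | hlt
      · exact .inl ⟨huv, .inr ⟨h, hlt⟩⟩
      · exact .inr ⟨huv.symm, .inr ⟨h.symm, hlt⟩⟩
    · exact .inl ⟨huv, .inl h⟩
    · exact .inr ⟨huv.symm, .inl h⟩
  asymm u v := by
    have hlevel : ∀ a b : ZMod 3, b = a + 1 → a ≠ b + 1 ∧ a ≠ b := by decide
    rintro ⟨-, h | ⟨h, hlt⟩⟩ ⟨-, h' | ⟨h', hlt'⟩⟩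
    · exact (hlevel _ _ h).1 h'
    · exact (hlevel _ _ h).2 h'.symm
    · exact (hlevel _ _ h').2 h.symm
    · omega

theorem exists_orientation_ddiam_le_four [Fintype V] (hbl : Bridgeless G) {c : V}
    (hc : ∀ v ≠ c, G.Adj c v) :
    ∃ H, IsOrientation G H ∧ StronglyConnected H ∧ ddiam H ≤ 4 := by
  obtain ⟨f, hf⟩ := (G.deleteIncidenceSet c).exists_labelling_exists_adj_ne
  obtain ⟨r, hr⟩ := Countable.exists_injective_nat V
  let φ : V → ZMod 3 := fun v => if v = c then 0 else if f v then 2 else 1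
  let H := cyclicOrientation G φ r
  have level_one {v} (hv : v ≠ c) (hfv : f v = false) : φ v = 1 := by simp [φ, hv, hfv]
  have level_two {v} (hv : v ≠ c) (hfv : f v = true) : φ v = 2 := by simp [φ, hv, hfv]
  have arc_c_one {v} (hv : v ≠ c) (hfv : f v = false) : H c v :=
    ⟨hc v hv, .inl (by simp [φ, level_one hv hfv])⟩
  have arc_one_two {u v} (huv : G.Adj u v) (hu : u ≠ c) (hv : v ≠ c) (hfu : f u = false)
      (hfv : f v = true) : H u v :=
    ⟨huv, .inl (by rw [level_one hu hfu, level_two hv hfv]; decide)⟩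
  have arc_two_c {v} (hv : v ≠ c) (hfv : f v = true) : H v c :=
    ⟨(hc v hv).symm, .inl (by simp [φ, level_two hv hfv]; decide)⟩
  have across {v} (hv : v ≠ c) : ∃ w ≠ c, G.Adj v w ∧ f w = !f v := by
    obtain ⟨w, hwc, hvw⟩ := hbl.exists_adj_ne (hc v hv)
    obtain ⟨u, hvu, hu⟩ := hf v w (SimpleGraph.deleteIncidenceSet_adj.mpr ⟨hvw, hv, hwc⟩)
    rw [SimpleGraph.deleteIncidenceSet_adj] at hvu
    exact ⟨u, hvu.2.2, hvu.1, Bool.eq_not_iff.mpr hu⟩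
  have hout (v : V) : ∃ m ≤ 2, HasWalk H m v c := by
    by_cases hv : v = c
    · exact ⟨0, by omega, hv ▸ hasWalk_zero v⟩
    obtain ⟨w, hwc, hvw, hfw⟩ := across hv
    cases hfv : f v
    · rw [hfv] at hfw
      exact ⟨2, le_rfl,
        (hasWalk_one (arc_one_two hvw hv hwc hfv hfw)).append (hasWalk_one (arc_two_c hwc hfw))⟩
    · exact ⟨1, by omega, hasWalk_one (arc_two_c hv hfv)⟩
  have hin (v : V) : ∃ m ≤ 2, HasWalk H m c v := by
    by_cases hv : v = c
    · exact ⟨0, by omega, hv ▸ hasWalk_zero v⟩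
    obtain ⟨w, hwc, hvw, hfw⟩ := across hv
    cases hfv : f v
    · exact ⟨1, by omega, hasWalk_one (arc_c_one hv hfv)⟩
    · rw [hfv] at hfw
      exact ⟨2, le_rfl, (hasWalk_one (arc_c_one hwc hfw)).append
        (hasWalk_one (arc_one_two hvw.symm hwc hv hfw hfv))⟩
  refine ⟨H, isOrientation_cyclicOrientation φ hr, fun u v => ?_, ddiam_le_add_of_hub hout hin⟩
  obtain ⟨_, -, hu⟩ := hout u
  obtain ⟨_, -, hv⟩ := hin v
  exact hu.reflTransGen.trans hv.reflTransGen

end Orientation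

section PendantTriangle

variable {V : Type*} {G : SimpleGraph V} {H : V → V → Prop} {c x y : V}

/-- Strong connectivity needs an arc into `x` and one out of `y`; the only candidates are `c → x`
and `y → c`. -/
theorem IsOrientation.arc_iff_of_pendant_triangle (ho : IsOrientation G H)
    (hsc : StronglyConnected H) (hx : ∀ w, G.Adj x w → w = y ∨ w = c)
    (hy : ∀ w, G.Adj y w → w = x ∨ w = c) (hxy : H x y) :
    (∀ w, H x w ↔ w = y) ∧ (∀ w, H y w ↔ w = c) := by
  have hne : y ≠ x := (ho.le_adj _ _ hxy).ne'
  have hcx : H c x := by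
    rcases (hsc y x).cases_tail with h | ⟨w, -, hwx⟩
    · exact absurd h hne.symm
    · rcases hx w (ho.le_adj _ _ hwx).symm with rfl | rfl
      · exact absurd hwx (ho.asymm _ _ hxy)
      · exact hwx
  have hyc : H y c := by
    rcases (hsc y x).cases_head with h | ⟨w, hyw, -⟩
    · exact absurd h hne
    · rcases hy w (ho.le_adj _ _ hyw) with rfl | rfl
      · exact absurd hyw (ho.asymm _ _ hxy)
      · exact hyw
  refine ⟨fun w => ⟨fun h => ?_, by rintro rfl; exact hxy⟩,
    fun w => ⟨fun h => ?_, by rintro rfl; exact hyc⟩⟩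
  · refine (hx w (ho.le_adj _ _ h)).resolve_right ?_
    rintro rfl
    exact ho.asymm _ _ hcx h
  · refine (hy w (ho.le_adj _ _ h)).resolve_left ?_
    rintro rfl
    exact ho.asymm _ _ hxy h

theorem IsOrientation.exists_arc_iff_of_pendant_triangle (ho : IsOrientation G H)
    (hsc : StronglyConnected H) (hx : ∀ w, G.Adj x w → w = y ∨ w = c)
    (hy : ∀ w, G.Adj y w → w = x ∨ w = c) (hxy : G.Adj x y) :
    ∃ a b, (a = x ∧ b = y ∨ a = y ∧ b = x) ∧ (∀ w, H a w ↔ w = b) ∧ (∀ w, H b w ↔ w = c) := by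
  rcases ho.total x y hxy with h | h
  · exact ⟨x, y, .inl ⟨rfl, rfl⟩, ho.arc_iff_of_pendant_triangle hsc hx hy h⟩
  · exact ⟨y, x, .inr ⟨rfl, rfl⟩, ho.arc_iff_of_pendant_triangle hsc hy hx h⟩

end PendantTriangle

/-- Two triangles `0 1 2` and `0 3 4` sharing the vertex `0`. -/
def bowtie : SimpleGraph (Fin 5) where
  Adj u v := u ≠ v ∧ (u = 0 ∨ v = 0 ∨ (u.val ≤ 2 ↔ v.val ≤ 2))
  symm := ⟨fun _ _ h => ⟨h.1.symm, by tauto⟩⟩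
  loopless := ⟨fun _ h => h.1 rfl⟩

instance : DecidableRel bowtie.Adj := fun u v =>
  inferInstanceAs (Decidable (u ≠ v ∧ (u = 0 ∨ v = 0 ∨ (u.val ≤ 2 ↔ v.val ≤ 2))))

theorem bowtie_eq_or_exists_adj_adj (u v : Fin 5) :
    u = v ∨ ∃ w, bowtie.Adj u w ∧ bowtie.Adj w v := by
  revert u v
  decide

theorem bowtie_connected : bowtie.Connected := by
  refine .mk fun u v => ?_
  rcases bowtie_eq_or_exists_adj_adj u v with rfl | ⟨w, huw, hwv⟩
  · rfl
  · exact huw.reachable.trans hwv.reachable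

theorem bowtie_bridgeless : Bridgeless bowtie := by
  intro e
  induction e using Sym2.ind with
  | _ u v =>
    rcases bowtie_eq_or_exists_adj_adj u v with rfl | ⟨w, huw, hwv⟩
    · simp [SimpleGraph.isBridge_iff]
    · exact not_isBridge_of_adj_of_adj huw hwv

theorem bowtie_dominationNumber : dominationNumber bowtie = 1 :=
  dominationNumber_eq_one_iff.mpr ⟨0, by decide⟩

/-- With the triangles oriented `0 → a → b → 0` and `0 → a' → b' → 0`, every walk from `a` to `b'`
starts `a → b → 0` and then needs two more steps. -/
theorem four_le_ddiam_of_bowtie {H : Fin 5 → Fin 5 → Prop} (ho : IsOrientation bowtie H)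
    (hsc : StronglyConnected H) : 4 ≤ ddiam H := by
  obtain ⟨a, b, hab, ha, hb⟩ := ho.exists_arc_iff_of_pendant_triangle (c := 0) (x := 1) (y := 2)
    hsc (by decide) (by decide) (by decide)
  obtain ⟨a', b', hab', -, hb'⟩ := ho.exists_arc_iff_of_pendant_triangle (c := 0) (x := 3) (y := 4)
    hsc (by decide) (by decide) (by decide)
  have h0b' : ¬ H 0 b' := ho.asymm _ _ ((hb' 0).mpr rfl)
  refine le_trans ?_ (ddist_le_ddiam a b')
  rcases hab with ⟨rfl, rfl⟩ | ⟨rfl, rfl⟩ <;> rcases hab' with ⟨rfl, rfl⟩ | ⟨rfl, rfl⟩ <;>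
    exact four_le_ddist (by decide) (by decide) (by decide) (fun w => (ha w).mp)
      (fun w => (hb w).mp) h0b' (hsc _ _)

theorem minOrientedDiam_bowtie : minOrientedDiam bowtie = 4 := by
  obtain ⟨H, ho, hsc, hH⟩ := exists_orientation_ddiam_le_four bowtie_bridgeless
    (c := 0) (by decide)
  exact le_antisymm ((minOrientedDiam_le_ddiam ho hsc).trans hH)
    (le_minOrientedDiam ⟨H, ho, hsc⟩ fun _ => four_le_ddiam_of_bowtie)

/-- Every bridgeless connected graph with domination number 1 has minimum oriented
diameter at most 4, and the bound is attained. -/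
theorem gamma_1_bound :
    (∀ (V : Type) [Fintype V] (G : SimpleGraph V), G.Connected → Bridgeless G →
      dominationNumber G = 1 → minOrientedDiam G ≤ 4) ∧
    (∃ (V : Type) (_ : Fintype V) (G : SimpleGraph V), G.Connected ∧ Bridgeless G ∧
      dominationNumber G = 1 ∧ minOrientedDiam G = 4) := by
  refine ⟨fun V _ G hconn hbl hdom => ?_, Fin 5, inferInstance, bowtie, bowtie_connected,
    bowtie_bridgeless, bowtie_dominationNumber, minOrientedDiam_bowtie⟩
  have := hconn.nonempty
  obtain ⟨c, hc⟩ := dominationNumber_eq_one_iff.mp hdom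
  obtain ⟨H, ho, hsc, hH⟩ := exists_orientation_ddiam_le_four hbl hc
  exact (minOrientedDiam_le_ddiam ho hsc).trans hH
end

section
/- Let G' and G be bridgeless connected graphs with G a subgraph of G', and let D be a dominating set of both G' and G. Then for every strongly connected orientation H of G there exists a strongly connected orientation H' of G' whose diameter is at most max{diam_0(H,D)+4, diam_1(H,D)+2, diam_2(H,D)}, where diam_i(H,D) denotes the maximum directed distance d_H(u,v) over ordered pairs (u,v) with exactly i of the two vertices lying outside D. -/
open scoped Classical

/-- `ddiamPart H D i` is the maximum directed distance `d_H(u,v)` over ordered pairs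
`(u,v)` of which exactly `i` members lie outside `D`. -/
noncomputable def ddiamPart {V : Type*} [Fintype V] (H : V → V → Prop) (D : Set V)
    (i : ℕ) : ℕ :=
  Finset.univ.sup fun p : V × V =>
    if (if p.1 ∈ D then 0 else 1) + (if p.2 ∈ D then 0 else 1) = i
    then ddist H p.1 p.2 else 0

/-!
Keep `H` on `G` and orient the remaining edges of `G'` so that every vertex `x` outside `S`
can be entered from `D`, and can leave for `D`, within two arcs; a pair of vertices is then
joined through `H` at the stated cost. A colour `c x` decides the direction of the edge between
`x` and a fixed `D`-neighbour `δ x`, the other `D`-edges at `x` go the other way, an edge to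
`u ∈ S \ D` prolongs the arc between `u` and `D` given by `H`, and an edge between two vertices
outside `S` is oriented from the one entered from `D` to the one leaving for `D`. A colouring
maximising a max-cut potential makes this work at every vertex outside `S`.
-/

namespace OrientationExtension

section RelPath

variable {α : Type*} {K : α → α → Prop} {m n : ℕ} {u v w : α}

def RelPath (K : α → α → Prop) (n : ℕ) (u v : α) : Prop :=
  ∃ f : ℕ → α, f 0 = u ∧ f n = v ∧ ∀ i < n, K (f i) (f (i + 1))

theorem RelPath.refl (u : α) : RelPath K 0 u u :=
  ⟨fun _ => u, rfl, rfl, fun _ h => absurd h (Nat.not_lt_zero _)⟩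

theorem RelPath.single (h : K u v) : RelPath K 1 u v :=
  ⟨fun i => if i = 0 then u else v, rfl, rfl, fun i hi => by
    obtain rfl : i = 0 := by omega
    simpa using h⟩

theorem RelPath.trans (h₁ : RelPath K m u v) (h₂ : RelPath K n v w) :
    RelPath K (m + n) u w := by
  obtain ⟨f, rfl, rfl, hf⟩ := h₁
  obtain ⟨g, hg0, rfl, hg⟩ := h₂
  refine ⟨fun i => if i ≤ m then f i else g (i - m), by simp, ?_, fun i hi => ?_⟩
  · rcases Nat.eq_zero_or_pos n with rfl | hn
    · simp [hg0]
    · simp [show ¬ m + n ≤ m by omega]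
  · rcases lt_or_ge i m with hi' | hi'
    · simpa [hi'.le, Nat.succ_le_of_lt hi'] using hf i hi'
    · have := hg (i - m) (by omega)
      rcases hi'.eq_or_lt with rfl | hlt
      · simpa [hg0, Nat.add_sub_cancel_left] using this
      · simpa [show ¬ i ≤ m by omega, show ¬ i + 1 ≤ m by omega,
          show i + 1 - m = i - m + 1 by omega] using this

theorem RelPath.map {β : Type*} {K' : β → β → Prop} (g : α → β)
    (hg : ∀ a b, K a b → K' (g a) (g b)) (h : RelPath K n u v) :
    RelPath K' n (g u) (g v) := by
  obtain ⟨f, rfl, rfl, hf⟩ := h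
  exact ⟨g ∘ f, rfl, rfl, fun i hi => hg _ _ (hf i hi)⟩

theorem RelPath.reflTransGen (h : RelPath K n u v) : Relation.ReflTransGen K u v := by
  obtain ⟨f, rfl, rfl, hf⟩ := h
  induction n with
  | zero => exact .refl
  | succ n ih => exact (ih fun i hi => hf i (by omega)).tail (hf n n.lt_succ_self)

theorem exists_relPath_of_reflTransGen (h : Relation.ReflTransGen K u v) :
    ∃ n, RelPath K n u v := by
  induction h with
  | refl => exact ⟨0, .refl _⟩
  | tail _ hbc ih =>
    obtain ⟨n, hn⟩ := ih
    exact ⟨n + 1, hn.trans (.single hbc)⟩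

theorem ddist_le_of_relPath (h : RelPath K n u v) : ddist K u v ≤ n := Nat.sInf_le h

theorem relPath_ddist (h : Relation.ReflTransGen K u v) : RelPath K (ddist K u v) u v :=
  Nat.sInf_mem (exists_relPath_of_reflTransGen h)

theorem ddist_le_ddiamPart [Fintype α] (D : Set α) (u v : α) :
    ddist K u v ≤ ddiamPart K D ((if u ∈ D then 0 else 1) + (if v ∈ D then 0 else 1)) :=
  le_trans (by simp) (Finset.le_sup (f := fun p : α × α =>
    if (if p.1 ∈ D then 0 else 1) + (if p.2 ∈ D then 0 else 1) =
      (if u ∈ D then 0 else 1) + (if v ∈ D then 0 else 1)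
    then ddist K p.1 p.2 else 0) (Finset.mem_univ (u, v)))

theorem ddiam_le_of_forall_relPath [Fintype α] {B : ℕ}
    (h : ∀ u v, ∃ n ≤ B, RelPath K n u v) : ddiam K ≤ B :=
  Finset.sup_le fun ⟨u, v⟩ _ =>
    let ⟨_, hn, hp⟩ := h u v
    (ddist_le_of_relPath hp).trans hn

theorem stronglyConnected_of_forall_relPath (h : ∀ u v, ∃ n, RelPath K n u v) :
    StronglyConnected K :=
  fun u v => let ⟨_, hp⟩ := h u v; hp.reflTransGen

end RelPath

section TieBreak

variable {V : Type*}

def tieBreak (P : V → V → Prop) (u v : V) : Prop :=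
  (P u v ∧ ¬ P v u) ∨ ((P u v ↔ P v u) ∧ WellOrderingRel u v)

theorem tieBreak_of {P : V → V → Prop} {u v : V} (h : P u v) (h' : ¬ P v u) :
    tieBreak P u v :=
  Or.inl ⟨h, h'⟩

theorem isOrientation_tieBreak (G : SimpleGraph V) (P : V → V → Prop) :
    IsOrientation G fun u v => G.Adj u v ∧ tieBreak P u v := by
  have key : ∀ u v, u ≠ v → (tieBreak P u v ↔ ¬ tieBreak P v u) := by
    intro u v huv
    rcases trichotomous_of WellOrderingRel u v with h | rfl | h
    · have := asymm_of WellOrderingRel h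
      unfold tieBreak; tauto
    · exact absurd rfl huv
    · have := asymm_of WellOrderingRel h
      unfold tieBreak; tauto
  refine ⟨fun _ _ h => h.1, fun u v h => ?_, fun u v h h' => ?_⟩
  · by_cases ht : tieBreak P u v
    · exact Or.inl ⟨h, ht⟩
    · exact Or.inr ⟨h.symm, (key v u h.ne.symm).2 ht⟩
  · exact (key u v h.1.ne).1 h.2 h'.2

end TieBreak

theorem exists_adj_ne_of_bridgeless {V : Type*} {G : SimpleGraph V} (hG : Bridgeless G)
    {u v : V} (h : G.Adj u v) : ∃ w, G.Adj u w ∧ w ≠ v := by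
  obtain ⟨p⟩ := not_not.1 (SimpleGraph.isBridge_iff.not.1 (hG s(u, v)))
  have hadj := p.adj_snd (p.not_nil_of_ne h.ne)
  rw [SimpleGraph.deleteEdges_adj] at hadj
  exact ⟨_, hadj.1, fun hw => hadj.2 (by rw [hw]; rfl)⟩

section Construction

variable {V : Type*} (G' : SimpleGraph V) (S D : Set V) (H : S → S → Prop) (δ : V → V)
  (c : V → Bool)

def HArc (u v : V) : Prop := ∃ (hu : u ∈ S) (hv : v ∈ S), H ⟨u, hu⟩ ⟨v, hv⟩

def HasArcFromD (u : V) : Prop := ∃ (hu : u ∈ S) (a : S), (a : V) ∈ D ∧ H a ⟨u, hu⟩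

/-- Whether the edge between `u ∈ S` and `x ∉ S` is oriented towards `x`. -/
def Feeds (u x : V) : Prop :=
  if u ∈ D then (u = δ x ↔ c x = true) else HasArcFromD S D H u

/-- `DArc c true x`: an arc enters `x` from `D`; `DArc c false x`: an arc leaves `x` for `D`. -/
def DArc (b : Bool) (x : V) : Prop := ∃ d ∈ D, G'.Adj d x ∧ (d = δ x ↔ c x = b)

def Prefers (u v : V) : Prop :=
  if u ∈ S then (if v ∈ S then HArc S H u v else Feeds S D H δ c u v)
  else if v ∈ S then ¬ Feeds S D H δ c v u
  else DArc G' D δ c true u ∧ DArc G' D δ c false v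

def ExtArc (u v : V) : Prop := G'.Adj u v ∧ tieBreak (Prefers G' S D H δ c) u v

/-- As `DArc`, but through a vertex of `S \ D`. -/
def SideArc (b : Bool) (x : V) : Prop :=
  ∃ u ∈ S, u ∉ D ∧ G'.Adj u x ∧ (HasArcFromD S D H u ↔ b = true)

def Covered (b : Bool) (x : V) : Prop :=
  DArc G' D δ c b x ∨ SideArc G' S D H b x ∨ ∃ w ∉ S, G'.Adj x w ∧ DArc G' D δ c b w

end Construction

section Arcs

variable {V : Type*} {G' : SimpleGraph V} {S D : Set V} {H : S → S → Prop} {δ : V → V}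
  {c : V → Bool}

theorem extArc_of_hArc {G : SimpleGraph S}
    (hsub : ∀ a b : S, G.Adj a b → G'.Adj (a : V) (b : V)) (hH : IsOrientation G H)
    {a b : S} (h : H a b) : ExtArc G' S D H δ c a b := by
  refine ⟨hsub _ _ (hH.le_adj _ _ h), tieBreak_of ?_ ?_⟩
  · simp only [Prefers, if_pos a.2, if_pos b.2]
    exact ⟨a.2, b.2, h⟩
  · simp only [Prefers, if_pos a.2, if_pos b.2]
    exact fun ⟨_, _, h'⟩ => hH.asymm _ _ h h'

theorem extArc_of_feeds {u x : V} (hu : u ∈ S) (hx : x ∉ S) (hadj : G'.Adj u x)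
    (h : Feeds S D H δ c u x) : ExtArc G' S D H δ c u x :=
  ⟨hadj, tieBreak_of (by simpa [Prefers, hu, hx] using h) (by simpa [Prefers, hu, hx] using h)⟩

theorem extArc_of_not_feeds {u x : V} (hu : u ∈ S) (hx : x ∉ S) (hadj : G'.Adj u x)
    (h : ¬ Feeds S D H δ c u x) : ExtArc G' S D H δ c x u :=
  ⟨hadj.symm,
    tieBreak_of (by simpa [Prefers, hu, hx] using h) (by simpa [Prefers, hu, hx] using h)⟩

theorem exists_extArc_of_dArc_true (hDS : D ⊆ S) {x : V} (hx : x ∉ S)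
    (h : DArc G' D δ c true x) : ∃ d ∈ D, ExtArc G' S D H δ c d x := by
  obtain ⟨d, hd, hadj, hdir⟩ := h
  exact ⟨d, hd, extArc_of_feeds (hDS hd) hx hadj (by simpa [Feeds, hd] using hdir)⟩

theorem exists_extArc_of_dArc_false (hDS : D ⊆ S) {x : V} (hx : x ∉ S)
    (h : DArc G' D δ c false x) : ∃ d ∈ D, ExtArc G' S D H δ c x d := by
  obtain ⟨d, hd, hadj, hdir⟩ := h
  exact ⟨d, hd, extArc_of_not_feeds (hDS hd) hx hadj (by
    rw [Feeds, if_pos hd]; cases h : c x <;> simp_all)⟩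

variable (hδ : ∀ x ∉ S, δ x ∈ D ∧ G'.Adj (δ x) x)
include hδ

theorem dArc_self {x : V} (hx : x ∉ S) : DArc G' D δ c (c x) x :=
  ⟨δ x, (hδ x hx).1, (hδ x hx).2, by simp⟩

theorem extArc_of_dArc_true {w x : V} (hw : w ∉ S) (hx : x ∉ S) (hadj : G'.Adj w x)
    (hwD : DArc G' D δ c true w) (hxD : ¬ DArc G' D δ c true x) :
    ExtArc G' S D H δ c w x := by
  have hcx : c x = false := by
    by_contra hc
    exact hxD (by simpa [hc] using dArc_self hδ (c := c) hx)
  refine ⟨hadj, tieBreak_of ?_ ?_⟩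
  · simpa [Prefers, hw, hx, hwD, hcx] using dArc_self hδ (c := c) hx
  · simp [Prefers, hw, hx, hxD]

theorem extArc_of_dArc_false {w x : V} (hw : w ∉ S) (hx : x ∉ S) (hadj : G'.Adj x w)
    (hwD : DArc G' D δ c false w) (hxD : ¬ DArc G' D δ c false x) :
    ExtArc G' S D H δ c x w := by
  have hcx : c x = true := by
    by_contra hc
    exact hxD (by simpa [hc] using dArc_self hδ (c := c) hx)
  refine ⟨hadj, tieBreak_of ?_ ?_⟩
  · simpa [Prefers, hw, hx, hwD, hcx] using dArc_self hδ (c := c) hx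
  · simp [Prefers, hw, hx, hxD]

end Arcs

section Covered

variable {V : Type*} {G' : SimpleGraph V} {S D : Set V} {G : SimpleGraph S} {H : S → S → Prop}
  {δ : V → V} {c : V → Bool}

theorem exists_arc_to_D_of_not_hasArcFromD (hD : Dominating G {a : S | (a : V) ∈ D})
    (hH : IsOrientation G H) {u : V} (hu : u ∈ S) (huD : u ∉ D) (h : ¬ HasArcFromD S D H u) :
    ∃ a : S, (a : V) ∈ D ∧ H ⟨u, hu⟩ a := by
  obtain ⟨a, ha, hadj⟩ := hD ⟨u, hu⟩ huD
  exact ⟨a, ha, (hH.total _ _ hadj).resolve_left fun h' => h ⟨hu, a, ha, h'⟩⟩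

variable (hsub : ∀ a b : S, G.Adj a b → G'.Adj (a : V) (b : V)) (hH : IsOrientation G H)
include hsub hH

theorem exists_relPath_of_sideArc_true {x : V} (hx : x ∉ S) (h : SideArc G' S D H true x) :
    ∃ d ∈ D, RelPath (ExtArc G' S D H δ c) 2 d x := by
  obtain ⟨u, hu, huD, hadj, hfrom⟩ := h
  obtain ⟨hu, a, ha, hau⟩ := hfrom.2 rfl
  have hux : ExtArc G' S D H δ c u x :=
    extArc_of_feeds hu hx hadj (by rw [Feeds, if_neg huD]; exact ⟨hu, a, ha, hau⟩)
  exact ⟨a, ha, (RelPath.single (extArc_of_hArc hsub hH hau)).trans (.single hux)⟩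

theorem exists_relPath_of_sideArc_false (hD : Dominating G {a : S | (a : V) ∈ D}) {x : V}
    (hx : x ∉ S) (h : SideArc G' S D H false x) :
    ∃ d ∈ D, RelPath (ExtArc G' S D H δ c) 2 x d := by
  obtain ⟨u, hu, huD, hadj, hfrom⟩ := h
  have hnot : ¬ HasArcFromD S D H u := by simpa using hfrom
  obtain ⟨a, ha, hua⟩ := exists_arc_to_D_of_not_hasArcFromD hD hH hu huD hnot
  have hxu : ExtArc G' S D H δ c x u :=
    extArc_of_not_feeds hu hx hadj (by rwa [Feeds, if_neg huD])
  exact ⟨a, ha, (RelPath.single hxu).trans (.single (extArc_of_hArc hsub hH hua))⟩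

variable (hDS : D ⊆ S) (hδ : ∀ x ∉ S, δ x ∈ D ∧ G'.Adj (δ x) x)
include hDS hδ

theorem exists_relPath_from_D {x : V} (hx : x ∉ S) (h : Covered G' S D H δ c true x) :
    ∃ d ∈ D, ∃ m ≤ 2, RelPath (ExtArc G' S D H δ c) m d x := by
  by_cases hxD : DArc G' D δ c true x
  · obtain ⟨d, hd, hdx⟩ := exists_extArc_of_dArc_true hDS hx hxD
    exact ⟨d, hd, 1, by norm_num, .single hdx⟩
  rcases h with h | h | ⟨w, hw, hadj, hwD⟩
  · exact absurd h hxD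
  · obtain ⟨d, hd, hp⟩ := exists_relPath_of_sideArc_true hsub hH hx h
    exact ⟨d, hd, 2, le_rfl, hp⟩
  · obtain ⟨d, hd, hdw⟩ := exists_extArc_of_dArc_true hDS hw hwD
    exact ⟨d, hd, 2, le_rfl,
      (RelPath.single hdw).trans (.single (extArc_of_dArc_true hδ hw hx hadj.symm hwD hxD))⟩

theorem exists_relPath_to_D (hD : Dominating G {a : S | (a : V) ∈ D}) {x : V} (hx : x ∉ S)
    (h : Covered G' S D H δ c false x) :
    ∃ d ∈ D, ∃ m ≤ 2, RelPath (ExtArc G' S D H δ c) m x d := by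
  by_cases hxD : DArc G' D δ c false x
  · obtain ⟨d, hd, hxd⟩ := exists_extArc_of_dArc_false hDS hx hxD
    exact ⟨d, hd, 1, by norm_num, .single hxd⟩
  rcases h with h | h | ⟨w, hw, hadj, hwD⟩
  · exact absurd h hxD
  · obtain ⟨d, hd, hp⟩ := exists_relPath_of_sideArc_false hsub hH hD hx h
    exact ⟨d, hd, 2, le_rfl, hp⟩
  · obtain ⟨d, hd, hwd⟩ := exists_extArc_of_dArc_false hDS hw hwD
    exact ⟨d, hd, 2, le_rfl,
      (RelPath.single (extArc_of_dArc_false hδ hw hx hadj hwD hxD)).trans (.single hwd)⟩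

end Covered

section Potential

variable {V : Type*} [Fintype V] {G' : SimpleGraph V} {S D : Set V} {H : S → S → Prop}
  {δ : V → V} {c : V → Bool} {x : V} {b : Bool}

variable (G' S D δ) in
noncomputable def cutPairs (c : V → Bool) : Finset (V × V) :=
  Finset.univ.filter fun p => p.1 ∉ S ∧ p.2 ∉ S ∧ G'.Adj p.1 p.2 ∧
    ∃ b, DArc G' D δ c b p.1 ∧ DArc G' D δ c (!b) p.2

variable (G' S D H) in
noncomputable def sideHits (c : V → Bool) : Finset V :=
  Finset.univ.filter fun x => x ∉ S ∧ SideArc G' S D H (!c x) x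

variable (G' S D H δ) in
noncomputable def potential (c : V → Bool) : ℕ :=
  (cutPairs G' S D δ c).card + (sideHits G' S D H c).card

omit [Fintype V] in
theorem dArc_update_of_ne {y : V} (hy : y ≠ x) (b' : Bool) :
    DArc G' D δ (Function.update c x b) b' y ↔ DArc G' D δ c b' y := by
  simp [DArc, Function.update_of_ne hy]

theorem ne_of_mem_cutPairs_of_not_covered (h : ¬ Covered G' S D H δ c b x) {p : V × V}
    (hp : p ∈ cutPairs G' S D δ c) : p.1 ≠ x ∧ p.2 ≠ x := by
  simp only [Covered, not_or, not_exists, not_and] at h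
  obtain ⟨hxD, -, hnbr⟩ := h
  simp only [cutPairs, Finset.mem_filter, Finset.mem_univ, true_and] at hp
  obtain ⟨h1, h2, hadj, b', hb1, hb2⟩ := hp
  constructor
  · rintro rfl
    rcases Bool.eq_or_eq_not b' b with rfl | rfl
    · exact hxD hb1
    · exact hnbr _ h2 hadj (by simpa using hb2)
  · rintro rfl
    rcases Bool.eq_or_eq_not b' b with rfl | rfl
    · exact hnbr _ h1 hadj.symm hb1
    · exact hxD (by simpa using hb2)

theorem cutPairs_subset_update (h : ¬ Covered G' S D H δ c b x) :
    cutPairs G' S D δ c ⊆ cutPairs G' S D δ (Function.update c x b) := by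
  intro p hp
  obtain ⟨hp1, hp2⟩ := ne_of_mem_cutPairs_of_not_covered h hp
  simpa only [cutPairs, Finset.mem_filter, dArc_update_of_ne hp1, dArc_update_of_ne hp2]
    using hp

theorem sideHits_subset_update (h : ¬ Covered G' S D H δ c b x)
    (hδ : ∀ x ∉ S, δ x ∈ D ∧ G'.Adj (δ x) x) :
    sideHits G' S D H c ⊆ sideHits G' S D H (Function.update c x b) := by
  intro y hy
  simp only [sideHits, Finset.mem_filter, Finset.mem_univ, true_and] at hy ⊢
  have hyx : y ≠ x := by
    rintro rfl
    have hcx : c y ≠ b := fun hc => h (Or.inl (hc ▸ dArc_self hδ hy.1))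
    exact h (Or.inr (Or.inl (by simpa [Bool.eq_not_of_ne hcx] using hy.2)))
  simpa [Function.update_of_ne hyx] using hy

/-- Recolouring an uncovered vertex `x` loses nothing counted by `potential` and gains the edge
or side arc at `x` given by a second neighbour of `x`, which exists as `x`–`δ x` is no bridge. -/
theorem potential_lt_update (hG'b : Bridgeless G')
    (hδ : ∀ x ∉ S, δ x ∈ D ∧ G'.Adj (δ x) x) (hx : x ∉ S)
    (h : ¬ Covered G' S D H δ c b x) :
    potential G' S D H δ c < potential G' S D H δ (Function.update c x b) := by
  have hcx : c x = !b := Bool.eq_not_of_ne fun hc => h (Or.inl (hc ▸ dArc_self hδ hx))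
  have hcut := cutPairs_subset_update h
  have hside := sideHits_subset_update h hδ
  obtain ⟨y, hxy, hyδ⟩ := exists_adj_ne_of_bridgeless hG'b (hδ x hx).2.symm
  have hyx : y ≠ x := hxy.ne.symm
  by_cases hyS : y ∈ S
  · have hyD : y ∉ D := fun hyD => h (Or.inl ⟨y, hyD, hxy.symm, by simp [hyδ, hcx]⟩)
    have hx_new : x ∈ sideHits G' S D H (Function.update c x b) := by
      simp only [sideHits, Finset.mem_filter, Finset.mem_univ, true_and, Function.update_self]
      refine ⟨hx, y, hyS, hyD, hxy.symm, ?_⟩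
      by_contra hy
      exact h (Or.inr (Or.inl ⟨y, hyS, hyD, hxy.symm, by cases b <;> simp_all⟩))
    have hx_old : x ∉ sideHits G' S D H c := by
      simpa [sideHits, hcx] using fun _ hb => h (Or.inr (Or.inl hb))
    have := Finset.card_lt_card (Finset.ssubset_iff_of_subset hside |>.2 ⟨x, hx_new, hx_old⟩)
    have := Finset.card_le_card hcut
    unfold potential; omega
  · have hcy : c y = !b := Bool.eq_not_of_ne fun hc =>
      h (Or.inr (Or.inr ⟨y, hyS, hxy, hc ▸ dArc_self hδ hyS⟩))
    have hxy_new : (x, y) ∈ cutPairs G' S D δ (Function.update c x b) := by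
      simp only [cutPairs, Finset.mem_filter, Finset.mem_univ, true_and]
      refine ⟨hx, hyS, hxy, b, ?_, ?_⟩
      · simpa using dArc_self hδ (c := Function.update c x b) hx
      · simpa [Function.update_of_ne hyx, hcy] using
          dArc_self hδ (c := Function.update c x b) hyS
    have := Finset.card_lt_card (Finset.ssubset_iff_of_subset hcut |>.2
      ⟨(x, y), hxy_new, fun hmem => (ne_of_mem_cutPairs_of_not_covered h hmem).1 rfl⟩)
    have := Finset.card_le_card hside
    unfold potential; omega

theorem exists_forall_covered (hG'b : Bridgeless G')
    (hδ : ∀ x ∉ S, δ x ∈ D ∧ G'.Adj (δ x) x) :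
    ∃ c : V → Bool, ∀ x ∉ S, ∀ b, Covered G' S D H δ c b x := by
  obtain ⟨c, -, hmax⟩ :=
    Finset.univ.exists_max_image (potential G' S D H δ) ⟨fun _ => true, Finset.mem_univ _⟩
  refine ⟨c, fun x hx b => ?_⟩
  by_contra h
  exact (hmax _ (Finset.mem_univ _)).not_gt (potential_lt_update hG'b hδ hx h)

end Potential

theorem add_ddist_add_le {α : Type*} [Fintype α] (K : α → α → Prop) (D : Set α) {a b : α}
    {m n : ℕ} (ha : m = 0 ∨ (a ∈ D ∧ m ≤ 2)) (hb : n = 0 ∨ (b ∈ D ∧ n ≤ 2)) :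
    m + ddist K a b + n ≤
      max (ddiamPart K D 0 + 4) (max (ddiamPart K D 1 + 2) (ddiamPart K D 2)) := by
  have := ddist_le_ddiamPart (K := K) D a b
  simp only [le_max_iff]
  by_cases haD : a ∈ D <;> by_cases hbD : b ∈ D <;> simp [haD, hbD] at this ha hb <;> omega

section Ports

variable {V : Type*} {G' : SimpleGraph V} {S D : Set V} {G : SimpleGraph S}
  {H : S → S → Prop} {δ : V → V} {c : V → Bool}
  (hsub : ∀ a b : S, G.Adj a b → G'.Adj (a : V) (b : V)) (hH : IsOrientation G H)
  (hDS : D ⊆ S) (hδ : ∀ x ∉ S, δ x ∈ D ∧ G'.Adj (δ x) x)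
  (hc : ∀ x ∉ S, ∀ b, Covered G' S D H δ c b x)
include hsub hH hDS hδ hc

theorem exists_relPath_to_S (hD : Dominating G {a : S | (a : V) ∈ D}) (u : V) :
    ∃ (a : S) (m : ℕ), (m = 0 ∨ ((a : V) ∈ D ∧ m ≤ 2)) ∧
      RelPath (ExtArc G' S D H δ c) m u a := by
  by_cases hu : u ∈ S
  · exact ⟨⟨u, hu⟩, 0, Or.inl rfl, .refl _⟩
  · obtain ⟨d, hd, m, hm, hp⟩ := exists_relPath_to_D hsub hH hDS hδ hD hu (hc u hu false)
    exact ⟨⟨d, hDS hd⟩, m, Or.inr ⟨hd, hm⟩, hp⟩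

theorem exists_relPath_from_S (v : V) :
    ∃ (b : S) (n : ℕ), (n = 0 ∨ ((b : V) ∈ D ∧ n ≤ 2)) ∧
      RelPath (ExtArc G' S D H δ c) n b v := by
  by_cases hv : v ∈ S
  · exact ⟨⟨v, hv⟩, 0, Or.inl rfl, .refl _⟩
  · obtain ⟨d, hd, n, hn, hp⟩ := exists_relPath_from_D hsub hH hDS hδ hv (hc v hv true)
    exact ⟨⟨d, hDS hd⟩, n, Or.inr ⟨hd, hn⟩, hp⟩

theorem exists_relPath_le [Fintype S] (hD : Dominating G {a : S | (a : V) ∈ D})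
    (hsc : StronglyConnected H) (u v : V) :
    ∃ n ≤ max (ddiamPart H {a : S | (a : V) ∈ D} 0 + 4)
      (max (ddiamPart H {a : S | (a : V) ∈ D} 1 + 2) (ddiamPart H {a : S | (a : V) ∈ D} 2)),
      RelPath (ExtArc G' S D H δ c) n u v := by
  obtain ⟨a, m, ha, hua⟩ := exists_relPath_to_S hsub hH hDS hδ hc hD u
  obtain ⟨b, n, hb, hbv⟩ := exists_relPath_from_S hsub hH hDS hδ hc v
  have hab : RelPath (ExtArc G' S D H δ c) (ddist H a b) a b :=
    (relPath_ddist (hsc a b)).map Subtype.val fun _ _ => extArc_of_hArc hsub hH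
  exact ⟨m + ddist H a b + n, add_ddist_add_le H _ ha hb, (hua.trans hab).trans hbv⟩

end Ports

end OrientationExtension

theorem orientation_extension_general {V : Type*} [Fintype V] (G' : SimpleGraph V)
    (S : Set V) [Fintype S] (G : SimpleGraph S)
    (hsub : ∀ a b : S, G.Adj a b → G'.Adj (a : V) (b : V))
    (hG'b : Bridgeless G')
    (D : Set V) (hDS : D ⊆ S) (hD' : Dominating G' D)
    (hD : Dominating G {a : S | (a : V) ∈ D})
    (H : S → S → Prop) (hH : IsOrientation G H) (hsc : StronglyConnected H) :
    ∃ H' : V → V → Prop, IsOrientation G' H' ∧ StronglyConnected H' ∧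
      ddiam H' ≤ max (ddiamPart H {a : S | (a : V) ∈ D} 0 + 4)
        (max (ddiamPart H {a : S | (a : V) ∈ D} 1 + 2)
          (ddiamPart H {a : S | (a : V) ∈ D} 2)) := by
  obtain ⟨δ, hδ⟩ : ∃ δ : V → V, ∀ x ∉ S, δ x ∈ D ∧ G'.Adj (δ x) x := by
    choose! δ hδ using fun x (hx : x ∉ S) => hD' x fun h => hx (hDS h)
    exact ⟨δ, hδ⟩
  obtain ⟨c, hc⟩ := OrientationExtension.exists_forall_covered (H := H) hG'b hδ
  have hpath := OrientationExtension.exists_relPath_le hsub hH hDS hδ hc hD hsc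
  refine ⟨OrientationExtension.ExtArc G' S D H δ c,
    OrientationExtension.isOrientation_tieBreak _ _, ?_,
    OrientationExtension.ddiam_le_of_forall_relPath hpath⟩
  exact OrientationExtension.stronglyConnected_of_forall_relPath fun u v =>
    (hpath u v).imp fun _ => And.right

/-- Lemma on extending an orientation of a bridgeless dominating subgraph `G` of `G'`
to a strongly connected orientation of `G'` with controlled diameter. -/
theorem orientation_extension {V : Type*} [Fintype V] (G' : SimpleGraph V)
    (S : Set V) [Fintype S] (G : SimpleGraph S)
    (hsub : ∀ a b : S, G.Adj a b → G'.Adj (a : V) (b : V))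
    (hGc : G.Connected) (hGb : Bridgeless G)
    (hG'c : G'.Connected) (hG'b : Bridgeless G')
    (D : Set V) (hDS : D ⊆ S) (hD' : Dominating G' D)
    (hD : Dominating G {a : S | (a : V) ∈ D})
    (H : S → S → Prop) (hH : IsOrientation G H) (hsc : StronglyConnected H) :
    ∃ H' : V → V → Prop, IsOrientation G' H' ∧ StronglyConnected H' ∧
      ddiam H' ≤ max (ddiamPart H {a : S | (a : V) ∈ D} 0 + 4)
        (max (ddiamPart H {a : S | (a : V) ∈ D} 1 + 2)
          (ddiamPart H {a : S | (a : V) ∈ D} 2)) :=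
  orientation_extension_general G' S G hsub hG'b D hDS hD' hD H hH hsc
end

section
/- Let G be a bridgeless connected graph with a dominating set D of size at least 2 such that no two vertices of D are adjacent. Then there exists a subtree T of G with D ⊆ V(T) and |V(T)| ≤ 3|D| − 2, constructed by iteratively attaching shortest paths (each of length at most 3) from vertices of D to the current tree. -/
open scoped Classical

/-!
Grow a connected subgraph `H` from a single vertex of `D`. While some vertex of `D` is missing,
domination yields a missing vertex of `D` joined to `H` by a walk of length at most 3: walking
from a missing vertex of `D` towards `H`, the vertex two steps ahead is in `H`, or in `D`, or
adjacent to a vertex of `D`, and in each case a walk of length at most 3 or a strictly shorter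
walk from a missing vertex of `D` to `H` appears. So every new vertex of `D` costs at most 3
vertices, and `|V(H)| ≤ 1 + 3 (|D| - 1)`. A spanning tree of the final `H` is the required tree.
-/

open SimpleGraph

section

variable {V : Type*} {G : SimpleGraph V}

namespace SimpleGraph

theorem Subgraph.Connected.exists_isTree_le {H : G.Subgraph} (hH : H.Connected) :
    ∃ T ≤ H, T.verts = H.verts ∧ T.coe.IsTree := by
  obtain ⟨T, hle, hT⟩ := hH.coe.exists_isTree_le
  let T' : G.Subgraph :=
    { verts := H.verts
      Adj := fun a b => ∃ (ha : a ∈ H.verts) (hb : b ∈ H.verts), T.Adj ⟨a, ha⟩ ⟨b, hb⟩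
      adj_sub := fun ⟨_, _, h⟩ => H.adj_sub (hle h)
      edge_vert := fun ⟨ha, _, _⟩ => ha
      symm := ⟨fun _ _ ⟨ha, hb, h⟩ => ⟨hb, ha, h.symm⟩⟩ }
  have hcoe : T'.coe = T := by
    ext x y
    exact ⟨fun ⟨_, _, h⟩ => h, fun h => ⟨x.2, y.2, h⟩⟩
  exact ⟨T', ⟨le_rfl, fun _ _ ⟨_, _, h⟩ => hle h⟩, rfl, hcoe ▸ hT⟩

theorem Subgraph.ncard_verts_sup_toSubgraph_le (H : G.Subgraph) {w u : V} (hw : w ∈ H.verts)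
    (q : G.Walk w u) : (H ⊔ q.toSubgraph).verts.ncard ≤ H.verts.ncard + q.length := by
  have hsub : (H ⊔ q.toSubgraph).verts ⊆ H.verts ∪ ↑q.support.tail.toFinset := by
    rintro x (hx | hx)
    · exact Or.inl hx
    · rw [Walk.mem_verts_toSubgraph, ← Walk.cons_tail_support, List.mem_cons] at hx
      rcases hx with rfl | hx
      · exact Or.inl hw
      · exact Or.inr (by simpa using hx)
  rcases H.verts.finite_or_infinite with hfin | hinf
  swap
  · rw [(hinf.mono (Subgraph.verts_mono le_sup_left)).ncard]
    exact Nat.zero_le _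
  calc (H ⊔ q.toSubgraph).verts.ncard
      ≤ (H.verts ∪ ↑q.support.tail.toFinset).ncard :=
        Set.ncard_le_ncard hsub (hfin.union (Finset.finite_toSet _))
    _ ≤ H.verts.ncard + q.support.tail.toFinset.card := by
      grw [Set.ncard_union_le, Set.ncard_coe_finset]
    _ ≤ H.verts.ncard + q.length := by
      grw [List.toFinset_card_le, List.length_tail, Walk.length_support, Nat.add_sub_cancel]

end SimpleGraph

theorem Dominating.exists_walk_length_le_three {D S : Set V}
    (hD : Dominating G D) {d w : V} (hd : d ∈ D) (hdS : d ∉ S) (hw : w ∈ S) (p : G.Walk d w) :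
    ∃ u ∈ D \ S, ∃ x ∈ S, ∃ q : G.Walk u x, q.length ≤ 3 := by
  induction hn : p.length using Nat.strong_induction_on generalizing d with
  | _ n ih =>
  by_cases hp : p.length ≤ 3
  · exact ⟨d, ⟨hd, hdS⟩, w, hw, p, hp⟩
  cases p with
  | nil => simp at hp
  | cons h₁ p =>
  cases p with
  | nil => simp at hp
  | @cons _ x _ h₂ r =>
  simp only [Walk.length_cons] at hn
  by_cases hxS : x ∈ S
  · exact ⟨d, ⟨hd, hdS⟩, x, hxS, .cons h₁ (.cons h₂ .nil), by simp⟩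
  by_cases hxD : x ∈ D
  · exact ih r.length (by omega) hxD hxS r rfl
  obtain ⟨d', hd', hd'x⟩ := hD x hxD
  by_cases hd'S : d' ∈ S
  · exact ⟨d, ⟨hd, hdS⟩, d', hd'S, .cons h₁ (.cons h₂ (.cons hd'x.symm .nil)), by simp⟩
  · exact ih (r.length + 1) (by omega) hd' hd'S (.cons hd'x r) rfl

theorem Dominating.exists_connected_extension {D : Set V}
    (hD : Dominating G D) (hconn : G.Connected) {H : G.Subgraph} (hH : H.Connected)
    (hDH : ¬ D ⊆ H.verts) :
    ∃ H' : G.Subgraph, H'.Connected ∧ H ≤ H' ∧ (∃ u ∈ D \ H.verts, u ∈ H'.verts) ∧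
      H'.verts.ncard ≤ H.verts.ncard + 3 := by
  obtain ⟨d, hd, hdH⟩ := Set.not_subset.1 hDH
  obtain ⟨w, hw⟩ := hH.nonempty
  obtain ⟨u, hu, x, hx, q, hq⟩ :=
    hD.exists_walk_length_le_three hd hdH hw (hconn.preconnected d w).some
  refine ⟨H ⊔ q.reverse.toSubgraph, ?_, le_sup_left,
    ⟨u, hu, Or.inr q.reverse.end_mem_verts_toSubgraph⟩, ?_⟩
  · exact Subgraph.connected_sup hH.preconnected q.reverse.toSubgraph_connected.preconnected
      ⟨x, hx, q.reverse.start_mem_verts_toSubgraph⟩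
  · grw [H.ncard_verts_sup_toSubgraph_le hx, Walk.length_reverse, hq]

theorem Dominating.exists_connected_subgraph_superset {D : Finset V} (hD : Dominating G ↑D)
    (hconn : G.Connected) {H : G.Subgraph} (hH : H.Connected)
    (hHD : H.verts.ncard + 2 ≤ 3 * (H.verts ∩ ↑D).ncard) :
    ∃ H' : G.Subgraph, H'.Connected ∧ ↑D ⊆ H'.verts ∧ H'.verts.ncard + 2 ≤ 3 * D.card := by
  induction hn : (↑D \ H.verts).ncard using Nat.strong_induction_on generalizing H with
  | _ n ih =>
  by_cases hDH : ↑D ⊆ H.verts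
  · rw [Set.inter_eq_right.2 hDH, Set.ncard_coe_finset] at hHD
    exact ⟨H, hH, hDH, hHD⟩
  obtain ⟨H', hH', hle, ⟨u, ⟨huD, huH⟩, huH'⟩, hcard⟩ :=
    hD.exists_connected_extension hconn hH hDH
  have hgain : (H.verts ∩ ↑D).ncard + 1 ≤ (H'.verts ∩ ↑D).ncard := by
    rw [← Set.ncard_insert_of_notMem (fun h => huH h.1) (D.finite_toSet.inter_of_right _)]
    exact Set.ncard_le_ncard
      (Set.insert_subset ⟨huH', huD⟩ (Set.inter_subset_inter_left _ (Subgraph.verts_mono hle)))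
      (D.finite_toSet.inter_of_right _)
  have hlt : (↑D \ H'.verts).ncard < n := by
    rw [← hn]
    exact Set.ncard_lt_ncard ⟨Set.sdiff_subset_sdiff_right (Subgraph.verts_mono hle),
      fun h => (h ⟨huD, huH⟩).2 huH'⟩ D.finite_toSet.sdiff
  exact ih _ hlt hH' (by omega) rfl

end

theorem dominating_tree_general {V : Type*} (G : SimpleGraph V)
    (hconn : G.Connected) (D : Finset V) (hD : Dominating G ↑D)
    (h2 : 2 ≤ D.card) :
    ∃ T : G.Subgraph, ↑D ⊆ T.verts ∧ T.coe.IsTree ∧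
      T.verts.ncard ≤ 3 * D.card - 2 := by
  obtain ⟨u, hu⟩ := Finset.card_pos.1 (by omega : 0 < D.card)
  have hstart : (G.singletonSubgraph u).verts.ncard + 2 ≤
      3 * ((G.singletonSubgraph u).verts ∩ ↑D).ncard := by
    simp [Set.singleton_inter_of_mem (Finset.mem_coe.2 hu)]
  obtain ⟨H, hH, hDH, hcard⟩ :=
    hD.exists_connected_subgraph_superset hconn Subgraph.singletonSubgraph_connected hstart
  obtain ⟨T, -, hTH, hT⟩ := hH.exists_isTree_le
  refine ⟨T, hTH ▸ hDH, hT, ?_⟩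
  rw [hTH]
  omega

/-- A dominating tree: if `D` is a dominating set of size at least `2` with no edges
inside `D`, then `G` has a subtree containing `D` with at most `3|D| - 2` vertices. -/
theorem dominating_tree {V : Type*} [Fintype V] (G : SimpleGraph V)
    (hconn : G.Connected) (D : Finset V) (hD : Dominating G ↑D)
    (h2 : 2 ≤ D.card) (hDind : ∀ u ∈ D, ∀ v ∈ D, ¬ G.Adj u v) :
    ∃ T : G.Subgraph, ↑D ⊆ T.verts ∧ T.coe.IsTree ∧
      T.verts.ncard ≤ 3 * D.card - 2 :=
  dominating_tree_general G hconn D hD h2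
end
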